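/- Let n ≥ 2 and let C = {x₁,…,x_k} ⊆ 𝔽₂ⁿ be a set of vectors, each with first coordinate 0, such that for all distinct i, j the sum x_i + x_j contains 101 as a subsequence. Then there exists a function f : 𝔽₂ⁿ → 𝔽₂ such that each x_i is a periodic point of period 2 of the SDS map F = L_{v_n} ∘ ⋯ ∘ L_{v_1}, and no two distinct x_i, x_j lie in the same 2-cycle of F (i.e., F(x_i) ≠ x_j for i ≠ j). -/

import Mathlib

/-- The SDS map over the complete graph `K n` with identity update order and
common vertex function `f`: vertices `0, 1, …, n-1` are updated in order,
each update replacing that coordinate with `f` of the current system state. -/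
def sdsMap {n : ℕ} (f : (Fin n → ZMod 2) → ZMod 2) (x : Fin n → ZMod 2) :
    Fin n → ZMod 2 :=
  (List.finRange n).foldl (fun v i => Function.update v i (f v)) x

/-- `z` contains `101` as a subsequence. -/
def contains101 {n : ℕ} (z : Fin n → ZMod 2) : Prop :=
  ∃ i j k : Fin n, i < j ∧ j < k ∧ z i = 1 ∧ z j = 0 ∧ z k = 1

/-- `z` contains `111` as a subsequence. -/
def contains111 {n : ℕ} (z : Fin n → ZMod 2) : Prop :=
  ∃ i j k : Fin n, i < j ∧ j < k ∧ z i = 1 ∧ z j = 1 ∧ z k = 1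

/-- The number of 2-cycles in the phase space of `sdsMap f`. -/
noncomputable def numTwoCycles {n : ℕ} (f : (Fin n → ZMod 2) → ZMod 2) : ℕ :=
  Set.ncard {p : Sym2 (Fin n → ZMod 2) |
    ∃ x y, p = s(x, y) ∧ x ≠ y ∧ sdsMap f x = y ∧ sdsMap f y = x}

/-- mask of ones on coordinates `< j`. -/
def maskLT {n : ℕ} (j : ℕ) : Fin n → ZMod 2 := fun k => if (k : ℕ) < j then 1 else 0

lemma zmod2_shuffle : ∀ u e A v d B : ZMod 2,
    u + e + A = v + d + B → u + v = (e + A) + (d + B) := by decide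

lemma zmod2_cases : ∀ a : ZMod 2, a = 0 ∨ a = 1 := by decide

lemma zmod2_sum0 : ∀ e d : ZMod 2, e + d = 0 → e = d := by decide

lemma zmod2_red0 : ∀ e A B w : ZMod 2, w = (e + A) + (e + B) → w = A + B := by decide

lemma zmod2_red1 : ∀ e d A B w : ZMod 2, e + d = 1 → w = (e + A) + (d + B) → w = 1 + A + B := by
  decide

lemma zmod2_self : ∀ u : ZMod 2, u + u = 0 := by decide

/-- Key uniqueness lemma: the representation `x + const ε + maskLT i` with `x ∈ C` is unique. -/
lemma uniq {n : ℕ} (hn : 1 < n) (C : Finset (Fin n → ZMod 2))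
    (hC0 : ∀ x ∈ C, x ⟨0, by omega⟩ = 0)
    (hCadj : ∀ x ∈ C, ∀ y ∈ C, x ≠ y → contains101 (x + y))
    {x y : Fin n → ZMod 2} (hx : x ∈ C) (hy : y ∈ C) {ε δ : ZMod 2} {i j : Fin n}
    (h : x + Function.const _ ε + maskLT (i : ℕ) = y + Function.const _ δ + maskLT (j : ℕ)) :
    x = y ∧ ε = δ ∧ i = j := by
  have key : ∀ k : Fin n, x k + y k = (ε + if (k:ℕ) < (i:ℕ) then 1 else 0)
      + (δ + if (k:ℕ) < (j:ℕ) then 1 else 0) := by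
    intro k
    have hk := congrFun h k
    simp only [Pi.add_apply, Function.const_apply, maskLT] at hk
    exact zmod2_shuffle _ _ _ _ _ _ hk
  rcases zmod2_cases (ε + δ) with hεδ | hεδ
  · have hed : ε = δ := zmod2_sum0 _ _ hεδ
    subst hed
    have key2 : ∀ k : Fin n, x k + y k =
        (if (k:ℕ) < (i:ℕ) then 1 else 0) + (if (k:ℕ) < (j:ℕ) then 1 else 0) :=
      fun k => zmod2_red0 _ _ _ _ (key k)
    by_cases hxy : x = y
    · subst hxy
      refine ⟨rfl, rfl, ?_⟩
      by_contra hij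
      rcases Nat.lt_or_ge (i:ℕ) (j:ℕ) with hlt | hge
      · have Hi := key2 i
        rw [zmod2_self (x i)] at Hi
        split_ifs at Hi <;> first | omega | (revert Hi; decide)
      · have hlt : (j:ℕ) < (i:ℕ) := by
          rcases Nat.lt_or_ge (j:ℕ) (i:ℕ) with h' | h'
          · exact h'
          · exact absurd (Fin.ext (le_antisymm h' hge) : i = j) hij
        have Hj := key2 j
        rw [zmod2_self (x j)] at Hj
        split_ifs at Hj <;> first | omega | (revert Hj; decide)
    · exfalso
      obtain ⟨a, b, c, hab, hbc, ha, hb, hc⟩ := hCadj x hx y hy hxy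
      simp only [Pi.add_apply] at ha hb hc
      have Ha := key2 a; rw [ha] at Ha
      have Hb := key2 b; rw [hb] at Hb
      have Hc := key2 c; rw [hc] at Hc
      have hab' : (a:ℕ) < (b:ℕ) := hab
      have hbc' : (b:ℕ) < (c:ℕ) := hbc
      split_ifs at Ha Hb Hc <;>
        first | omega | (revert Ha; decide) | (revert Hb; decide) | (revert Hc; decide)
  · exfalso
    have key2 : ∀ k : Fin n, x k + y k = 1 + (if (k:ℕ) < (i:ℕ) then 1 else 0)
        + (if (k:ℕ) < (j:ℕ) then 1 else 0) := by
      intro k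
      exact zmod2_red1 _ _ _ _ _ hεδ (key k)
    have h0 : x ⟨0, by omega⟩ + y ⟨0, by omega⟩ = 0 := by
      rw [hC0 x hx, hC0 y hy]; rfl
    have k0 := key2 ⟨0, by omega⟩
    rw [h0] at k0
    simp only [Fin.val_mk] at k0
    split_ifs at k0 with hi0 hj0 hj0
    · revert k0; decide
    · -- 0 < i, j = 0
      have hj : (j:ℕ) = 0 := by omega
      have key3 : ∀ k : Fin n, x k + y k = (if (k:ℕ) < (i:ℕ) then 0 else 1) := by
        intro k
        have := key2 k
        rw [hj] at this
        simp only [Nat.not_lt_zero, if_false, add_zero] at this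
        rw [this]
        split_ifs <;> decide
      by_cases hxy : x = y
      · subst hxy
        have Hi := key3 i
        rw [zmod2_self (x i), if_neg (lt_irrefl _)] at Hi
        exact absurd Hi (by decide)
      · obtain ⟨a, b, c, hab, hbc, ha, hb, hc⟩ := hCadj x hx y hy hxy
        simp only [Pi.add_apply] at ha hb hc
        have Ha := key3 a; rw [ha] at Ha
        have Hb := key3 b; rw [hb] at Hb
        have hab' : (a:ℕ) < (b:ℕ) := hab
        split_ifs at Ha Hb <;> first | omega | (revert Ha; decide) | (revert Hb; decide)
    · -- i = 0, 0 < j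
      have hi : (i:ℕ) = 0 := by omega
      have key3 : ∀ k : Fin n, x k + y k = (if (k:ℕ) < (j:ℕ) then 0 else 1) := by
        intro k
        have := key2 k
        rw [hi] at this
        simp only [Nat.not_lt_zero, if_false, add_zero] at this
        rw [this]
        split_ifs <;> decide
      by_cases hxy : x = y
      · subst hxy
        have Hj := key3 j
        rw [zmod2_self (x j), if_neg (lt_irrefl _)] at Hj
        exact absurd Hj (by decide)
      · obtain ⟨a, b, c, hab, hbc, ha, hb, hc⟩ := hCadj x hx y hy hxy
        simp only [Pi.add_apply] at ha hb hc
        have Ha := key3 a; rw [ha] at Ha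
        have Hb := key3 b; rw [hb] at Hb
        have hab' : (a:ℕ) < (b:ℕ) := hab
        split_ifs at Ha Hb <;> first | omega | (revert Ha; decide) | (revert Hb; decide)
    · revert k0; decide

/-- The vertex function: on states of the form `x + const ε + maskLT i` (`x ∈ C`), it
returns `w i + 1`; elsewhere `0`. -/
noncomputable def myf {n : ℕ} (C : Finset (Fin n → ZMod 2)) (w : Fin n → ZMod 2) : ZMod 2 :=
  if h : ∃ p : (Fin n → ZMod 2) × ZMod 2 × Fin n,
      p.1 ∈ C ∧ w = p.1 + Function.const _ p.2.1 + maskLT ((p.2.2 : ℕ)) then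
    w h.choose.2.2 + 1
  else 0

section
variable {n : ℕ} (hn : 2 ≤ n) (C : Finset (Fin n → ZMod 2))

lemma myf_eval (U : ∀ {x y : Fin n → ZMod 2}, x ∈ C → y ∈ C → ∀ {ε δ : ZMod 2} {i j : Fin n},
    x + Function.const _ ε + maskLT (i : ℕ) = y + Function.const _ δ + maskLT (j : ℕ) →
    x = y ∧ ε = δ ∧ i = j) {x : Fin n → ZMod 2} (hx : x ∈ C) (ε : ZMod 2) (i : Fin n) :
    myf C (x + Function.const _ ε + maskLT (i : ℕ)) = x i + ε + 1 := by
  have hex : ∃ p : (Fin n → ZMod 2) × ZMod 2 × Fin n,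
      p.1 ∈ C ∧ x + Function.const _ ε + maskLT ((i : ℕ)) =
        p.1 + Function.const _ p.2.1 + maskLT ((p.2.2 : ℕ)) :=
    ⟨(x, ε, i), hx, rfl⟩
  rw [myf, dif_pos hex]
  obtain ⟨hpC, hpw⟩ := hex.choose_spec
  obtain ⟨h1, h2, h3⟩ := U hx hpC hpw
  rw [← h3]
  simp only [Pi.add_apply, Function.const_apply, maskLT, lt_irrefl, if_false]
  ring

lemma sds_steps (U : ∀ {x y : Fin n → ZMod 2}, x ∈ C → y ∈ C → ∀ {ε δ : ZMod 2} {i j : Fin n},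
    x + Function.const _ ε + maskLT (i : ℕ) = y + Function.const _ δ + maskLT (j : ℕ) →
    x = y ∧ ε = δ ∧ i = j) {x : Fin n → ZMod 2} (hx : x ∈ C) (ε : ZMod 2) :
    ∀ m j : ℕ, j + m = n →
      (List.foldl (fun v i => Function.update v i (myf C v))
        (x + Function.const _ ε + maskLT j) ((List.finRange n).drop j))
      = x + Function.const _ ε + maskLT n := by
  intro m
  induction m with
  | zero =>
      intro j hj
      have hj' : j = n := by omega
      subst hj'
      rw [List.drop_eq_nil_of_le (by simp)]
      rfl
  | succ m ih =>
      intro j hj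
      have hjn : j < n := by omega
      rw [List.drop_eq_getElem_cons (by simpa using hjn), List.foldl_cons]
      have hget : (List.finRange n)[j]'(by simpa using hjn) = ⟨j, hjn⟩ := by simp
      rw [hget]
      have hupd : Function.update (x + Function.const _ ε + maskLT j) (⟨j, hjn⟩ : Fin n)
          (myf C (x + Function.const _ ε + maskLT j))
          = x + Function.const _ ε + maskLT (j + 1) := by
        have heval := myf_eval C U hx ε (⟨j, hjn⟩ : Fin n)
        simp only [Fin.val_mk] at heval
        rw [heval]
        funext k
        by_cases hk : k = ⟨j, hjn⟩
        · subst hk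
          rw [Function.update_self]
          simp only [Pi.add_apply, Function.const_apply, maskLT, Fin.val_mk,
            Nat.lt_succ_self, if_pos (Nat.lt_succ_self j), if_true]
        · rw [Function.update_of_ne hk]
          simp only [Pi.add_apply, Function.const_apply, maskLT]
          have hkj : (k : ℕ) ≠ j := fun hc => hk (Fin.ext hc)
          have : ((k:ℕ) < j) ↔ ((k:ℕ) < j + 1) := by omega
          rw [if_congr this rfl rfl]
      rw [hupd]
      exact ih (j + 1) (by omega)

lemma sds_eq (U : ∀ {x y : Fin n → ZMod 2}, x ∈ C → y ∈ C → ∀ {ε δ : ZMod 2} {i j : Fin n},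
    x + Function.const _ ε + maskLT (i : ℕ) = y + Function.const _ δ + maskLT (j : ℕ) →
    x = y ∧ ε = δ ∧ i = j) {x : Fin n → ZMod 2} (hx : x ∈ C) (ε : ZMod 2) :
    sdsMap (myf C) (x + Function.const _ ε) = x + Function.const _ (ε + 1) := by
  have h0 : x + Function.const _ ε = x + Function.const (Fin n) ε + maskLT 0 := by
    funext k; simp [maskLT]
  have hs := sds_steps C U hx ε n 0 (by omega)
  rw [List.drop_zero] at hs
  unfold sdsMap
  rw [h0, hs]
  funext k
  simp only [Pi.add_apply, Function.const_apply, maskLT, if_pos k.isLt]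
  ring

end

theorem stmt3 (n : ℕ) (hn : 2 ≤ n) (C : Finset (Fin n → ZMod 2))
    (hC0 : ∀ x ∈ C, x ⟨0, by omega⟩ = 0)
    (hCadj : ∀ x ∈ C, ∀ y ∈ C, x ≠ y → contains101 (x + y)) :
    ∃ f : (Fin n → ZMod 2) → ZMod 2,
      (∀ x ∈ C, sdsMap f (sdsMap f x) = x ∧ sdsMap f x ≠ x) ∧
      (∀ x ∈ C, ∀ y ∈ C, x ≠ y → sdsMap f x ≠ y) := by
  have U : ∀ {x y : Fin n → ZMod 2}, x ∈ C → y ∈ C → ∀ {ε δ : ZMod 2} {i j : Fin n},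
      x + Function.const _ ε + maskLT (i : ℕ) = y + Function.const _ δ + maskLT (j : ℕ) →
      x = y ∧ ε = δ ∧ i = j := by
    intro x y hx hy ε δ i j h
    exact uniq hn C hC0 hCadj hx hy h
  refine ⟨myf C, ?_, ?_⟩
  · intro x hx
    have hx0 : x + Function.const (Fin n) (0 : ZMod 2) = x := by funext k; simp
    have e0 : sdsMap (myf C) x = x + Function.const (Fin n) (1 : ZMod 2) := by
      have := sds_eq C @U hx 0
      rw [hx0] at this
      rw [this]
      norm_num
    have e1 : sdsMap (myf C) (x + Function.const (Fin n) (1 : ZMod 2)) = x := by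
      have := sds_eq C @U hx 1
      rw [this, show (1 : ZMod 2) + 1 = 0 by decide, hx0]
    constructor
    · rw [e0, e1]
    · rw [e0]
      intro hcon
      have := congrFun hcon ⟨0, by omega⟩
      rw [hC0 x hx] at this
      simp only [Pi.add_apply, Function.const_apply, hC0 x hx] at this
      exact absurd this (by decide)
  · intro x hx y hy hxy
    have hx0 : x + Function.const (Fin n) (0 : ZMod 2) = x := by funext k; simp
    have e0 : sdsMap (myf C) x = x + Function.const (Fin n) (1 : ZMod 2) := by
      have := sds_eq C @U hx 0
      rw [hx0] at this
      rw [this]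
      norm_num
    rw [e0]
    intro hcon
    have := congrFun hcon ⟨0, by omega⟩
    simp only [Pi.add_apply, Function.const_apply, hC0 x hx, hC0 y hy] at this
    exact absurd this (by decide)
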